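/- For d ≥ 3, the three families of matrix units give mutually orthogonal ideals summing to the identity: Σ_{i,j ∈ {S,A}} G^(0)_{ij} = 1_H − G^(1) − G^(2) (in particular this operator is an idempotent), and for all indices i,j,k,l,p,q ∈ {S,A}: G^(0)_{ij} G^(2)_{kl} = G^(2)_{kl} G^(0)_{ij} = 0, G^(0)_{ij} Ĝ^(1)_{[kl][pq]} = Ĝ^(1)_{[kl][pq]} G^(0)_{ij} = 0, and G^(2)_{ij} Ĝ^(1)_{[kl][pq]} = Ĝ^(1)_{[kl][pq]} G^(2)_{ij} = 0. -/

import Mathlib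

open Matrix Kronecker

namespace WBA

/-- Configurations of `p` qudits of local dimension `d`. -/
abbrev Conf (d p : ℕ) := Fin p → Fin d

/-- Operators on `H = (ℂ^d)^{⊗ 2p}`, indexed by pairs (unprimed configuration, primed
configuration). -/
abbrev Op (d p : ℕ) := Matrix (Conf d p × Conf d p) (Conf d p × Conf d p) ℂ

/-- The projector `P⁺_{a,c'}` onto the maximally entangled state between unprimed system `a`
and primed system `c`, tensored with the identity elsewhere. -/
noncomputable def Pplus (d p : ℕ) (a c : Fin p) : Op d p :=
  Matrix.of fun xy uv =>
    if xy.1 a = xy.2 c ∧ uv.1 a = uv.2 c ∧ (∀ j, j ≠ a → xy.1 j = uv.1 j) ∧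
        (∀ j, j ≠ c → xy.2 j = uv.2 j) then
      (d : ℂ)⁻¹
    else 0

/-- `d • P⁺_{a,c'}`, i.e. the partially transposed swap `V^{t_{c'}}_{(a,c')}`. -/
noncomputable def arc (d p : ℕ) (a c : Fin p) : Op d p := (d : ℂ) • Pplus d p a c

/-- `V^(k) = ∏_{j=p-k+1}^{p} (d • P⁺_{j,j'})` (product over the last `k` systems;
`V^(0) = 1`). -/
noncomputable def Vop (d p k : ℕ) : Op d p :=
  (((List.range p).filter (fun j => decide (p - k ≤ j))).map
    (fun j => if h : j < p then arc d p ⟨j, h⟩ ⟨j, h⟩ else 1)).prod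

/-- `Q^(p) = d^{-p} V^(p)` and `Q^(k) = d^{-k} V^(k) - d^{-(k+1)} V^(k+1)` for `k < p`. -/
noncomputable def Qop (d p k : ℕ) : Op d p :=
  if k = p then ((d : ℂ) ^ p)⁻¹ • Vop d p p
  else ((d : ℂ) ^ k)⁻¹ • Vop d p k - ((d : ℂ) ^ (k + 1))⁻¹ • Vop d p (k + 1)

/-- Permutation matrix on `(ℂ^d)^{⊗ n}`: sends `e_v` to `e_{v ∘ σ⁻¹}`. -/
noncomputable def permMat (d n : ℕ) (σ : Equiv.Perm (Fin n)) :
    Matrix (Fin n → Fin d) (Fin n → Fin d) ℂ :=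
  Matrix.of fun x u => if x = u ∘ ⇑σ⁻¹ then 1 else 0

/-- `V_σ`: permutation of the unprimed factors, identity on the primed factors. -/
noncomputable def VL (d p : ℕ) (σ : Equiv.Perm (Fin p)) : Op d p :=
  (permMat d p σ) ⊗ₖ (1 : Matrix (Conf d p) (Conf d p) ℂ)

/-- `V'_τ`: permutation of the primed factors, identity on the unprimed factors. -/
noncomputable def VR (d p : ℕ) (τ : Equiv.Perm (Fin p)) : Op d p :=
  (1 : Matrix (Conf d p) (Conf d p) ℂ) ⊗ₖ (permMat d p τ)

/-- Identification of `H` with `(ℂ^d)^{⊗ (p+p)}`. -/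
def glue (d p : ℕ) : (Conf d p × Conf d p) ≃ (Fin (p + p) → Fin d) :=
  (Equiv.sumArrowEquivProdArrow (Fin p) (Fin p) (Fin d)).symm.trans
    (Equiv.arrowCongr finSumFinEquiv (Equiv.refl (Fin d)))

/-- The permutation operator `W_π`, `π ∈ S_{2p}`, permuting all `2p` tensor factors of `H`. -/
noncomputable def Wfull (d p : ℕ) (π : Equiv.Perm (Fin (p + p))) : Op d p :=
  (permMat d (p + p) π).submatrix (glue d p) (glue d p)

/-- Partial transpose over the `p` primed factors:
`⟨x,y|M^Γ|u,v⟩ = ⟨x,v|M|u,y⟩`. -/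
noncomputable def ptrans (d p : ℕ) (M : Op d p) : Op d p :=
  Matrix.of fun xy uv => M (xy.1, uv.2) (uv.1, xy.2)

/-- The algebra `A^d_{p,p}` of partially transposed permutation operators, as a
linear subspace of `End(H)`. -/
noncomputable def Apt (d p : ℕ) : Submodule ℂ (Op d p) :=
  Submodule.span ℂ {M | ∃ π : Equiv.Perm (Fin (p + p)), M = ptrans d p (Wfull d p π)}

/-- Extension of an operator on systems `1,…,p-r,1',…,(p-r)'` by the identity on the
remaining systems. -/
noncomputable def embed (d p r : ℕ) (M : Op d (p - r)) : Op d p :=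
  Matrix.of fun xy uv =>
    M (xy.1 ∘ Fin.castLE (Nat.sub_le p r), xy.2 ∘ Fin.castLE (Nat.sub_le p r))
      (uv.1 ∘ Fin.castLE (Nat.sub_le p r), uv.2 ∘ Fin.castLE (Nat.sub_le p r)) *
    (if ∀ j : Fin p, p - r ≤ (j : ℕ) → xy.1 j = uv.1 j ∧ xy.2 j = uv.2 j then 1 else 0)

/-- The ideal `M̃^(k) = span{ V_σ V'_τ Q^(k) V_π V'_ρ }` of `A^d_{p,p}`. -/
noncomputable def Mtil (d p k : ℕ) : Submodule ℂ (Op d p) :=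
  Submodule.span ℂ {M | ∃ σ τ π ρ : Equiv.Perm (Fin p),
    M = VL d p σ * VR d p τ * Qop d p k * (VL d p π * VR d p ρ)}

/-- Labels for the two irreps of `S_2`: symmetric `S` and antisymmetric `A`. -/
inductive SA
  | S
  | A
deriving DecidableEq

instance instFintypeSA : Fintype SA :=
  ⟨{SA.S, SA.A}, fun x => by cases x <;> simp⟩

/-- The swap operator on `ℂ^d ⊗ ℂ^d`. -/
noncomputable def Fsw (d : ℕ) : Matrix (Conf d 2) (Conf d 2) ℂ :=
  Matrix.of fun x u => if x 0 = u 1 ∧ x 1 = u 0 then 1 else 0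

/-- Symmetric and antisymmetric projectors on `ℂ^d ⊗ ℂ^d`. -/
noncomputable def Esm (d : ℕ) : SA → Matrix (Conf d 2) (Conf d 2) ℂ
  | SA.S => (2 : ℂ)⁻¹ • (1 + Fsw d)
  | SA.A => (2 : ℂ)⁻¹ • (1 - Fsw d)

/-- `E_i ⊗ E_j` on `H = (ℂ^d)^{⊗4}`. -/
noncomputable def EE (d : ℕ) (i j : SA) : Op d 2 := (Esm d i) ⊗ₖ (Esm d j)

/-- `E_i ⊗ 1` on `H = (ℂ^d)^{⊗4}`. -/
noncomputable def EId (d : ℕ) (i : SA) : Op d 2 :=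
  (Esm d i) ⊗ₖ (1 : Matrix (Conf d 2) (Conf d 2) ℂ)

/-- Multiplicities `m_S = d(d+1)/2`, `m_A = d(d-1)/2` (real valued). -/
noncomputable def mR (d : ℕ) : SA → ℝ
  | SA.S => (d : ℝ) * ((d : ℝ) + 1) / 2
  | SA.A => (d : ℝ) * ((d : ℝ) - 1) / 2

/-- Multiplicities `m_S = d(d+1)/2`, `m_A = d(d-1)/2` (complex valued). -/
noncomputable def mC (d : ℕ) : SA → ℂ
  | SA.S => (d : ℂ) * ((d : ℂ) + 1) / 2
  | SA.A => (d : ℂ) * ((d : ℂ) - 1) / 2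

/-- `V^(1) = d • P⁺_{2,2'}` for `p = 2`. -/
noncomputable def V1 (d : ℕ) : Op d 2 := arc d 2 1 1

/-- `V^(2) = d² • P⁺_{2,2'} P⁺_{1,1'}` for `p = 2`. -/
noncomputable def V2 (d : ℕ) : Op d 2 := arc d 2 1 1 * arc d 2 0 0

/-- `Q^(2) = d^{-2} V^(2)` for `p = 2`. -/
noncomputable def Q2 (d : ℕ) : Op d 2 := ((d : ℂ) ^ 2)⁻¹ • V2 d

/-- `Q^(1) = d^{-1} V^(1) - d^{-2} V^(2)` for `p = 2`. -/
noncomputable def Q1 (d : ℕ) : Op d 2 :=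
  (d : ℂ)⁻¹ • V1 d - ((d : ℂ) ^ 2)⁻¹ • V2 d

/-- `G^(2)_{kl} = (d²/√(m_k m_l)) (E_k ⊗ 1) Q^(2) (E_l ⊗ 1)`. -/
noncomputable def G2 (d : ℕ) (k l : SA) : Op d 2 :=
  ((d : ℂ) ^ 2 / ((Real.sqrt (mR d k * mR d l) : ℝ) : ℂ)) • (EId d k * Q2 d * EId d l)

/-- `G^(2) = G^(2)_{SS} + G^(2)_{AA}`. -/
noncomputable def G2sum (d : ℕ) : Op d 2 := G2 d SA.S SA.S + G2 d SA.A SA.A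

/-- The Gram coefficients `b_{SS} = (d+2)/(4d)`, `b_{SA} = b_{AS} = 1/4`,
`b_{AA} = (d-2)/(4d)`. -/
noncomputable def bc (d : ℕ) : SA → SA → ℂ
  | SA.S, SA.S => ((d : ℂ) + 2) / (4 * (d : ℂ))
  | SA.S, SA.A => 1 / 4
  | SA.A, SA.S => 1 / 4
  | SA.A, SA.A => ((d : ℂ) - 2) / (4 * (d : ℂ))

/-- `Ĝ^(1)_{[ij][kl]} = (E_i ⊗ E_j) Q^(1) (E_k ⊗ E_l)`. -/
noncomputable def Ghat1 (d : ℕ) (i j k l : SA) : Op d 2 :=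
  EE d i j * Q1 d * EE d k l

/-- `G^(1)_{[ij][kl]} = b_{ij}⁻¹ Ĝ^(1)_{[ij][kl]}`. -/
noncomputable def G1 (d : ℕ) (i j k l : SA) : Op d 2 := (bc d i j)⁻¹ • Ghat1 d i j k l

/-- `G^(1) = Σ_{ij} G^(1)_{[ij][ij]}`. -/
noncomputable def G1sum (d : ℕ) : Op d 2 := ∑ i : SA, ∑ j : SA, G1 d i j i j

/-- `G^(0)_{ij} = E_i⊗E_j - b_{ij}⁻¹ (E_i⊗E_j)Q^(1)(E_i⊗E_j)
- δ_{ij} (d²/m_i) (E_i⊗1)Q^(2)(E_i⊗1)`. -/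
noncomputable def G0 (d : ℕ) (i j : SA) : Op d 2 :=
  EE d i j - (bc d i j)⁻¹ • (EE d i j * Q1 d * EE d i j) -
    (if i = j then (d : ℂ) ^ 2 / mC d i else 0) • (EId d i * Q2 d * EId d i)

/-!
Write `P₁ = P⁺_{2,2'}`, `P₀ = P⁺_{1,1'}`, `F_L = F ⊗ 1`, `F_R = 1 ⊗ F`. Then `Q^(2) = P₁ P₀`,
`Q^(1) = P₁ - Q^(2)`, and a few entrywise identities (`P₁ F_L P₁ = d⁻¹ P₁`,
`P₁ (F ⊗ F) P₁ = Q^(2)`, `F_L Q^(2) = F_R Q^(2)`, …) yield, after expanding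
`E_k = (1 ± F)/2`, the sandwich rules `Q^(1) (E_k ⊗ E_l) Q^(1) = b_{kl} Q^(1)`,
`Q^(2) (E_k ⊗ 1) Q^(2) = (m_k/d²) Q^(2)` and
`Q^(1) (E_k ⊗ E_l) Q^(2) = Q^(2) (E_k ⊗ E_l) Q^(1) = 0`.
So the `Ĝ^(1)` and the `Ĝ^(2)_{kl} = (E_k ⊗ 1) Q^(2) (E_l ⊗ 1)` multiply like matrix units scaled
by `b` and `m/d²`, the two families annihilate each other, and `G^(0)_{ij}` is `E_i ⊗ E_j` with
its components along both families removed. For `d ≥ 3` the scalars `b_{kl}`, `m_k` are nonzero,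
which is what makes the normalised sums idempotent and the cancellations exact.
-/

section

variable {d : ℕ}

lemma IsIdempotentElem.sum_inv_smul {ι K A : Type*} [Field K] [Ring A] [Algebra K A]
    [DecidableEq ι] (s : Finset ι) (f : ι → A) (c : ι → K) (hc : ∀ a ∈ s, c a ≠ 0)
    (hf : ∀ a ∈ s, ∀ b ∈ s, f a * f b = if a = b then c a • f a else 0) :
    IsIdempotentElem (∑ a ∈ s, (c a)⁻¹ • f a) := by
  rw [IsIdempotentElem, Finset.sum_mul_sum]
  refine Finset.sum_congr rfl fun a ha => ?_
  calc ∑ b ∈ s, (c a)⁻¹ • f a * (c b)⁻¹ • f b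
      = ∑ b ∈ s, if a = b then (c a)⁻¹ • f a else 0 := by
        refine Finset.sum_congr rfl fun b hb => ?_
        rw [smul_mul_smul_comm, hf a ha b hb]
        split_ifs with hab
        · rw [← hab, smul_smul, mul_assoc, inv_mul_cancel₀ (hc a ha), mul_one]
        · rw [smul_zero]
    _ = (c a)⁻¹ • f a := by rw [Finset.sum_ite_eq, if_pos ha]

/-
Entries are written with `kronDelta` rather than `if`: once a sum over `Conf d 2` is split into
coordinates, `simp` reduces `![a, b] 0` inside the arguments of `kronDelta`, but not inside the
`Decidable` instance of an `if`, which then blocks `Finset.sum_ite_eq`.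
-/
def kronDelta {α : Type*} [DecidableEq α] (a b : α) : ℂ := if a = b then 1 else 0

lemma sum_conf_two {M : Type*} [AddCommMonoid M] (f : Conf d 2 → M) :
    ∑ z, f z = ∑ a : Fin d, ∑ b : Fin d, f ![a, b] := by
  rw [← Equiv.sum_comp (finTwoArrowEquiv (Fin d)).symm f, Fintype.sum_prod_type]
  rfl

noncomputable def swapL (d : ℕ) : Op d 2 := Fsw d ⊗ₖ 1

noncomputable def swapR (d : ℕ) : Op d 2 := 1 ⊗ₖ Fsw d

lemma Fsw_apply (x u : Conf d 2) : Fsw d x u = kronDelta (x 0) (u 1) * kronDelta (x 1) (u 0) := by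
  simp only [Fsw, kronDelta, of_apply, ite_zero_mul_ite_zero, mul_one]

lemma swapL_apply (p q : Conf d 2 × Conf d 2) :
    swapL d p q = kronDelta (p.1 0) (q.1 1) * kronDelta (p.1 1) (q.1 0) *
      (kronDelta (p.2 0) (q.2 0) * kronDelta (p.2 1) (q.2 1)) := by
  simp only [swapL, kroneckerMap_apply, Fsw_apply, one_apply, funext_iff, Fin.forall_fin_two,
    kronDelta, ite_zero_mul_ite_zero, mul_one]

lemma swapR_apply (p q : Conf d 2 × Conf d 2) :
    swapR d p q = kronDelta (p.1 0) (q.1 0) * kronDelta (p.1 1) (q.1 1) *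
      (kronDelta (p.2 0) (q.2 1) * kronDelta (p.2 1) (q.2 0)) := by
  simp only [swapR, kroneckerMap_apply, Fsw_apply, one_apply, funext_iff, Fin.forall_fin_two,
    kronDelta, ite_zero_mul_ite_zero, mul_one]

lemma swapL_mul_swapR : swapL d * swapR d = Fsw d ⊗ₖ Fsw d := by
  rw [swapL, swapR, ← mul_kronecker_mul, Matrix.mul_one, Matrix.one_mul]

lemma Pplus_one_one_apply (p q : Conf d 2 × Conf d 2) :
    Pplus d 2 1 1 p q = (d : ℂ)⁻¹ * (kronDelta (p.1 1) (p.2 1) * kronDelta (q.1 1) (q.2 1) *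
      kronDelta (p.1 0) (q.1 0) * kronDelta (p.2 0) (q.2 0)) := by
  simp only [Pplus, of_apply, kronDelta, mul_ite, mul_one, mul_zero, Fin.forall_fin_two]
  split_ifs <;> simp_all

lemma Pplus_zero_zero_apply (p q : Conf d 2 × Conf d 2) :
    Pplus d 2 0 0 p q = (d : ℂ)⁻¹ * (kronDelta (p.1 0) (p.2 0) * kronDelta (q.1 0) (q.2 0) *
      kronDelta (p.1 1) (q.1 1) * kronDelta (p.2 1) (q.2 1)) := by
  simp only [Pplus, of_apply, kronDelta, mul_ite, mul_one, mul_zero, Fin.forall_fin_two]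
  split_ifs <;> simp_all

lemma Q2_eq_mul (hd : (d : ℂ) ≠ 0) : Q2 d = Pplus d 2 1 1 * Pplus d 2 0 0 := by
  rw [Q2, V2, arc, arc, smul_mul_smul_comm, smul_smul, ← sq, inv_mul_cancel₀ (pow_ne_zero 2 hd),
    one_smul]

lemma Q2_apply (hd : (d : ℂ) ≠ 0) (p q : Conf d 2 × Conf d 2) :
    Q2 d p q = ((d : ℂ) ^ 2)⁻¹ * (kronDelta (p.1 0) (p.2 0) * kronDelta (p.1 1) (p.2 1) *
      kronDelta (q.1 0) (q.2 0) * kronDelta (q.1 1) (q.2 1)) := by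
  rw [Q2_eq_mul hd]
  simp only [mul_apply, Fintype.sum_prod_type, sum_conf_two, Pplus_one_one_apply,
    Pplus_zero_zero_apply, Matrix.cons_val_zero, Matrix.cons_val_one]
  simp only [kronDelta, mul_ite, mul_one, mul_zero, ite_mul, zero_mul, Finset.sum_ite_eq',
    Finset.mem_univ, ↓reduceIte, Finset.sum_ite_irrel, Finset.sum_ite_eq, Finset.sum_const_zero]
  split_ifs <;> simp_all [sq]

lemma Pplus_one_one_mul_self (hd : (d : ℂ) ≠ 0) :
    Pplus d 2 1 1 * Pplus d 2 1 1 = Pplus d 2 1 1 := by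
  ext ⟨x, y⟩ ⟨u, v⟩
  simp only [mul_apply, Fintype.sum_prod_type, sum_conf_two, Pplus_one_one_apply,
    Matrix.cons_val_zero, Matrix.cons_val_one]
  simp only [kronDelta, mul_ite, mul_one, mul_zero, ite_mul, zero_mul, Finset.sum_ite_irrel,
    Finset.sum_ite_eq, Finset.mem_univ, ↓reduceIte, Finset.sum_const_zero, Finset.sum_ite_eq',
    Finset.sum_const, Finset.card_univ, Fintype.card_fin, nsmul_eq_mul]
  split_ifs <;> field_simp

lemma Pplus_zero_zero_mul_self (hd : (d : ℂ) ≠ 0) :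
    Pplus d 2 0 0 * Pplus d 2 0 0 = Pplus d 2 0 0 := by
  ext ⟨x, y⟩ ⟨u, v⟩
  simp only [mul_apply, Fintype.sum_prod_type, sum_conf_two, Pplus_zero_zero_apply,
    Matrix.cons_val_zero, Matrix.cons_val_one]
  simp only [kronDelta, mul_ite, mul_one, mul_zero, ite_mul, zero_mul, Finset.sum_ite_eq',
    Finset.mem_univ, ↓reduceIte, Finset.sum_ite_irrel, Finset.sum_ite_eq, Finset.sum_const_zero,
    Finset.sum_const, Finset.card_univ, Fintype.card_fin, nsmul_eq_mul]
  split_ifs <;> field_simp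

lemma Pplus_zero_zero_mul_Pplus_one_one (hd : (d : ℂ) ≠ 0) :
    Pplus d 2 0 0 * Pplus d 2 1 1 = Q2 d := by
  ext ⟨x, y⟩ ⟨u, v⟩
  simp only [mul_apply, Fintype.sum_prod_type, sum_conf_two, Pplus_one_one_apply,
    Pplus_zero_zero_apply, Q2_apply hd, Matrix.cons_val_zero, Matrix.cons_val_one]
  simp only [kronDelta, mul_ite, mul_one, mul_zero, ite_mul, zero_mul, Finset.sum_ite_irrel,
    Finset.sum_ite_eq, Finset.mem_univ, ↓reduceIte, Finset.sum_const_zero, Finset.sum_ite_eq']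
  split_ifs <;> simp_all [sq]

lemma Pplus_one_one_swapL_Pplus_one_one :
    Pplus d 2 1 1 * swapL d * Pplus d 2 1 1 = (d : ℂ)⁻¹ • Pplus d 2 1 1 := by
  ext ⟨x, y⟩ ⟨u, v⟩
  simp only [mul_apply, Finset.sum_mul, Fintype.sum_prod_type, sum_conf_two, Pplus_one_one_apply,
    swapL_apply, Matrix.cons_val_zero, Matrix.cons_val_one, Matrix.smul_apply, smul_eq_mul]
  simp only [kronDelta, mul_ite, mul_one, mul_zero, ite_mul, zero_mul, Finset.sum_ite_irrel,
    Finset.sum_ite_eq', Finset.mem_univ, ↓reduceIte, Finset.sum_const_zero, Finset.sum_ite_eq]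
  split_ifs <;> simp_all

lemma Pplus_one_one_swapR_Pplus_one_one :
    Pplus d 2 1 1 * swapR d * Pplus d 2 1 1 = (d : ℂ)⁻¹ • Pplus d 2 1 1 := by
  ext ⟨x, y⟩ ⟨u, v⟩
  simp only [mul_apply, Finset.sum_mul, Fintype.sum_prod_type, sum_conf_two, Pplus_one_one_apply,
    swapR_apply, Matrix.cons_val_zero, Matrix.cons_val_one, Matrix.smul_apply, smul_eq_mul]
  simp only [kronDelta, mul_ite, mul_one, mul_zero, ite_mul, zero_mul, Finset.sum_ite_irrel,
    Finset.sum_ite_eq', Finset.mem_univ, ↓reduceIte, Finset.sum_const_zero, Finset.sum_ite_eq]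
  split_ifs <;> simp_all

lemma Pplus_one_one_Fsw_Fsw_Pplus_one_one (hd : (d : ℂ) ≠ 0) :
    Pplus d 2 1 1 * (Fsw d ⊗ₖ Fsw d) * Pplus d 2 1 1 = Q2 d := by
  ext ⟨x, y⟩ ⟨u, v⟩
  simp only [mul_apply, Finset.sum_mul, Fintype.sum_prod_type, sum_conf_two, Pplus_one_one_apply,
    kroneckerMap_apply, Fsw_apply, Q2_apply hd, Matrix.cons_val_zero, Matrix.cons_val_one]
  simp only [kronDelta, mul_ite, mul_one, mul_zero, ite_mul, zero_mul, Finset.sum_ite_irrel,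
    Finset.sum_ite_eq', Finset.mem_univ, ↓reduceIte, Finset.sum_const_zero, Finset.sum_ite_eq]
  split_ifs <;> simp_all [sq]

lemma swapL_mul_Q2 (hd : (d : ℂ) ≠ 0) : swapL d * Q2 d = swapR d * Q2 d := by
  ext ⟨x, y⟩ ⟨u, v⟩
  simp only [mul_apply, Fintype.sum_prod_type, sum_conf_two, swapL_apply, swapR_apply, Q2_apply hd,
    Matrix.cons_val_zero, Matrix.cons_val_one]
  simp only [kronDelta, mul_ite, mul_one, mul_zero, ite_mul, one_mul, zero_mul,
    Finset.sum_ite_irrel, Finset.sum_ite_eq, Finset.mem_univ, ↓reduceIte, Finset.sum_const_zero]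

lemma Q2_mul_swapL (hd : (d : ℂ) ≠ 0) : Q2 d * swapL d = Q2 d * swapR d := by
  ext ⟨x, y⟩ ⟨u, v⟩
  simp only [mul_apply, Fintype.sum_prod_type, sum_conf_two, swapL_apply, swapR_apply, Q2_apply hd,
    Matrix.cons_val_zero, Matrix.cons_val_one]
  simp only [kronDelta, mul_ite, mul_one, mul_zero, Finset.sum_ite_eq', Finset.mem_univ,
    ↓reduceIte]
  split_ifs <;> simp_all

lemma Q2_swapL_Pplus_one_one (hd : (d : ℂ) ≠ 0) :
    Q2 d * swapL d * Pplus d 2 1 1 = (d : ℂ)⁻¹ • Q2 d := by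
  ext ⟨x, y⟩ ⟨u, v⟩
  simp only [mul_apply, Finset.sum_mul, Fintype.sum_prod_type, sum_conf_two, Pplus_one_one_apply,
    swapL_apply, Q2_apply hd, Matrix.cons_val_zero, Matrix.cons_val_one, Matrix.smul_apply,
    smul_eq_mul]
  simp only [kronDelta, mul_ite, mul_one, mul_zero, ite_mul, zero_mul, Finset.sum_ite_irrel,
    Finset.sum_ite_eq', Finset.mem_univ, ↓reduceIte, Finset.sum_const_zero, Finset.sum_ite_eq]
  split_ifs <;> simp_all [sq, mul_assoc]

lemma Q1_eq (hd : (d : ℂ) ≠ 0) : Q1 d = Pplus d 2 1 1 - Q2 d := by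
  rw [Q1, V1, arc, smul_smul, inv_mul_cancel₀ hd, one_smul, Q2]

lemma Pplus_one_one_mul_Q2 (hd : (d : ℂ) ≠ 0) : Pplus d 2 1 1 * Q2 d = Q2 d := by
  rw [Q2_eq_mul hd, ← mul_assoc, Pplus_one_one_mul_self hd]

lemma Q2_mul_Pplus_one_one (hd : (d : ℂ) ≠ 0) : Q2 d * Pplus d 2 1 1 = Q2 d := by
  rw [Q2_eq_mul hd, mul_assoc, Pplus_zero_zero_mul_Pplus_one_one hd, Pplus_one_one_mul_Q2 hd,
    Q2_eq_mul hd]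

lemma Q2_mul_Pplus_zero_zero (hd : (d : ℂ) ≠ 0) : Q2 d * Pplus d 2 0 0 = Q2 d := by
  rw [Q2_eq_mul hd, mul_assoc, Pplus_zero_zero_mul_self hd]

lemma Q2_mul_Q2 (hd : (d : ℂ) ≠ 0) : Q2 d * Q2 d = Q2 d := by
  nth_rw 2 [Q2_eq_mul hd]
  rw [← mul_assoc, Q2_mul_Pplus_one_one hd, Q2_mul_Pplus_zero_zero hd]

lemma Fsw_mul_self : Fsw d * Fsw d = 1 := by
  ext x u
  simp only [mul_apply, sum_conf_two, Fsw_apply, one_apply, funext_iff, Fin.forall_fin_two,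
    Matrix.cons_val_zero, Matrix.cons_val_one]
  simp only [kronDelta, mul_ite, mul_one, mul_zero, Finset.sum_ite_eq', Finset.mem_univ,
    ↓reduceIte]
  split_ifs <;> simp_all

lemma swapL_mul_self : swapL d * swapL d = 1 := by
  rw [swapL, ← mul_kronecker_mul, Fsw_mul_self, Matrix.one_mul, one_kronecker_one]

lemma swapR_mul_self : swapR d * swapR d = 1 := by
  rw [swapR, ← mul_kronecker_mul, Fsw_mul_self, Matrix.one_mul, one_kronecker_one]

lemma Fsw_Fsw_mul_Q2 (hd : (d : ℂ) ≠ 0) : (Fsw d ⊗ₖ Fsw d) * Q2 d = Q2 d := by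
  rw [← swapL_mul_swapR, mul_assoc, ← swapL_mul_Q2 hd, ← mul_assoc, swapL_mul_self,
    Matrix.one_mul]

lemma Q2_mul_Fsw_Fsw (hd : (d : ℂ) ≠ 0) : Q2 d * (Fsw d ⊗ₖ Fsw d) = Q2 d := by
  rw [← swapL_mul_swapR, ← mul_assoc, Q2_mul_swapL hd, mul_assoc, swapR_mul_self,
    Matrix.mul_one]

lemma Pplus_one_one_swapL_Q2 (hd : (d : ℂ) ≠ 0) :
    Pplus d 2 1 1 * swapL d * Q2 d = (d : ℂ)⁻¹ • Q2 d := by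
  rw [Q2_eq_mul hd, ← mul_assoc, Pplus_one_one_swapL_Pplus_one_one, smul_mul_assoc]

lemma Q2_swapL_Q2 (hd : (d : ℂ) ≠ 0) : Q2 d * swapL d * Q2 d = (d : ℂ)⁻¹ • Q2 d := by
  nth_rw 2 [Q2_eq_mul hd]
  rw [← mul_assoc, Q2_swapL_Pplus_one_one hd, smul_mul_assoc, Q2_mul_Pplus_zero_zero hd]

lemma Q1_mul_Q1 (hd : (d : ℂ) ≠ 0) : Q1 d * Q1 d = Q1 d := by
  simp only [Q1_eq hd, sub_mul, mul_sub, Pplus_one_one_mul_self hd, Pplus_one_one_mul_Q2 hd,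
    Q2_mul_Pplus_one_one hd, Q2_mul_Q2 hd]
  abel

lemma Q1_mul_Q2 (hd : (d : ℂ) ≠ 0) : Q1 d * Q2 d = 0 := by
  rw [Q1_eq hd, sub_mul, Pplus_one_one_mul_Q2 hd, Q2_mul_Q2 hd, sub_self]

lemma Q2_mul_Q1 (hd : (d : ℂ) ≠ 0) : Q2 d * Q1 d = 0 := by
  rw [Q1_eq hd, mul_sub, Q2_mul_Pplus_one_one hd, Q2_mul_Q2 hd, sub_self]

lemma Q1_swapL_Q1 (hd : (d : ℂ) ≠ 0) : Q1 d * swapL d * Q1 d = (d : ℂ)⁻¹ • Q1 d := by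
  simp only [Q1_eq hd, sub_mul, mul_sub, Pplus_one_one_swapL_Pplus_one_one,
    Pplus_one_one_swapL_Q2 hd, Q2_swapL_Pplus_one_one hd, Q2_swapL_Q2 hd, smul_sub]
  abel

lemma Q1_swapR_Q1 (hd : (d : ℂ) ≠ 0) : Q1 d * swapR d * Q1 d = (d : ℂ)⁻¹ • Q1 d := by
  have h₁ : Pplus d 2 1 1 * swapR d * Q2 d = Pplus d 2 1 1 * swapL d * Q2 d := by
    rw [mul_assoc, ← swapL_mul_Q2 hd, mul_assoc]
  have h₂ : Q2 d * swapR d = Q2 d * swapL d := (Q2_mul_swapL hd).symm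
  simp only [Q1_eq hd, sub_mul, mul_sub, Pplus_one_one_swapR_Pplus_one_one, h₁, h₂,
    Pplus_one_one_swapL_Q2 hd, Q2_swapL_Pplus_one_one hd, Q2_swapL_Q2 hd, smul_sub]
  abel

lemma Q1_Fsw_Fsw_Q1 (hd : (d : ℂ) ≠ 0) : Q1 d * (Fsw d ⊗ₖ Fsw d) * Q1 d = 0 := by
  simp only [Q1_eq hd, sub_mul, mul_sub, mul_assoc, Fsw_Fsw_mul_Q2 hd, Pplus_one_one_mul_Q2 hd,
    Q2_mul_Q2 hd]
  simp only [← mul_assoc, Pplus_one_one_Fsw_Fsw_Pplus_one_one hd, Q2_mul_Fsw_Fsw hd,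
    Q2_mul_Pplus_one_one hd]
  abel

lemma Q1_swapL_Q2 (hd : (d : ℂ) ≠ 0) : Q1 d * swapL d * Q2 d = 0 := by
  rw [Q1_eq hd, sub_mul, sub_mul, Pplus_one_one_swapL_Q2 hd, Q2_swapL_Q2 hd, sub_self]

lemma Q2_swapL_Q1 (hd : (d : ℂ) ≠ 0) : Q2 d * swapL d * Q1 d = 0 := by
  rw [Q1_eq hd, mul_sub, Q2_swapL_Pplus_one_one hd, Q2_swapL_Q2 hd, sub_self]

def SA.sign : SA → ℂ
  | SA.S => 1
  | SA.A => -1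

lemma SA.sum_univ {M : Type*} [AddCommMonoid M] (f : SA → M) : ∑ i, f i = f SA.S + f SA.A := by
  rw [show (Finset.univ : Finset SA) = {SA.S, SA.A} from rfl, Finset.sum_pair (by decide)]

lemma Esm_eq (i : SA) : Esm d i = (2 : ℂ)⁻¹ • (1 + i.sign • Fsw d) := by
  cases i <;> simp [Esm, SA.sign, sub_eq_add_neg]

lemma EId_eq (i : SA) : EId d i = (2 : ℂ)⁻¹ • (1 + i.sign • swapL d) := by
  rw [EId, Esm_eq, smul_kronecker, add_kronecker, smul_kronecker, one_kronecker_one, swapL]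

lemma EE_eq (i j : SA) :
    EE d i j = (4 : ℂ)⁻¹ • (1 + i.sign • swapL d + j.sign • swapR d +
      (i.sign * j.sign) • (Fsw d ⊗ₖ Fsw d)) := by
  simp only [EE, Esm_eq, smul_kronecker, kronecker_smul, add_kronecker, kronecker_add,
    one_kronecker_one, smul_smul, swapL, swapR]
  module

lemma Esm_mul_Esm (i j : SA) : Esm d i * Esm d j = if i = j then Esm d i else 0 := by
  have h : Esm d i * Esm d j =
      (4 : ℂ)⁻¹ • ((1 + i.sign * j.sign) • 1 + (i.sign + j.sign) • Fsw d) := by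
    simp only [Esm_eq, smul_mul_smul_comm, add_mul, mul_add, one_mul, mul_one, Fsw_mul_self]
    module
  rw [h]
  cases i <;> cases j <;> simp only [SA.sign, Esm_eq, reduceCtorEq, ↓reduceIte] <;> module

lemma sum_Esm : ∑ i, Esm d i = 1 := by
  rw [SA.sum_univ, Esm_eq, Esm_eq, SA.sign, SA.sign]
  module

lemma EId_mul_EId (i j : SA) : EId d i * EId d j = if i = j then EId d i else 0 := by
  rw [EId, EId, ← mul_kronecker_mul, Esm_mul_Esm, Matrix.one_mul]
  split_ifs <;> simp

lemma EE_mul_EE (i j k l : SA) :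
    EE d i j * EE d k l = if i = k ∧ j = l then EE d i j else 0 := by
  rw [EE, EE, ← mul_kronecker_mul, Esm_mul_Esm, Esm_mul_Esm]
  by_cases hik : i = k <;> by_cases hjl : j = l <;> simp [hik, hjl]

lemma EE_mul_EId (i j k : SA) : EE d i j * EId d k = if i = k then EE d i j else 0 := by
  rw [EE, EId, ← mul_kronecker_mul, Esm_mul_Esm, Matrix.mul_one]
  split_ifs <;> simp

lemma EId_mul_EE (k i j : SA) : EId d k * EE d i j = if k = i then EE d i j else 0 := by
  rw [EE, EId, ← mul_kronecker_mul, Esm_mul_Esm, Matrix.one_mul]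
  split_ifs with h <;> simp [h]

lemma sum_EE : ∑ i, ∑ j, EE d i j = 1 := by
  simp only [SA.sum_univ, EE]
  rw [← kronecker_add, ← kronecker_add, ← add_kronecker, ← SA.sum_univ (Esm d), sum_Esm,
    one_kronecker_one]

lemma bc_eq (hd : (d : ℂ) ≠ 0) (k l : SA) :
    bc d k l = 4⁻¹ * (1 + (k.sign + l.sign) / d) := by
  cases k <;> cases l <;> (simp only [bc, SA.sign, sub_eq_add_neg]; field_simp; ring)

lemma mC_div_sq (hd : (d : ℂ) ≠ 0) (k : SA) :
    mC d k / (d : ℂ) ^ 2 = 2⁻¹ * (1 + k.sign / d) := by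
  cases k <;> (simp only [mC, SA.sign, sub_eq_add_neg]; field_simp)

lemma Q1_EE_Q1 (hd : (d : ℂ) ≠ 0) (k l : SA) : Q1 d * EE d k l * Q1 d = bc d k l • Q1 d := by
  simp only [EE_eq, mul_add, add_mul, mul_smul_comm, smul_mul_assoc, mul_one, Q1_mul_Q1 hd,
    Q1_swapL_Q1 hd, Q1_swapR_Q1 hd, Q1_Fsw_Fsw_Q1 hd, smul_zero, add_zero, bc_eq hd]
  module

lemma Q2_EId_Q2 (hd : (d : ℂ) ≠ 0) (k : SA) :
    Q2 d * EId d k * Q2 d = (mC d k / (d : ℂ) ^ 2) • Q2 d := by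
  simp only [EId_eq, mul_add, add_mul, mul_smul_comm, smul_mul_assoc, mul_one, Q2_mul_Q2 hd,
    Q2_swapL_Q2 hd, mC_div_sq hd]
  module

lemma EE_mul_Q2 (hd : (d : ℂ) ≠ 0) (i j : SA) :
    EE d i j * Q2 d = if i = j then EId d i * Q2 d else 0 := by
  simp only [EE_eq, EId_eq, add_mul, smul_mul_assoc, one_mul, ← swapL_mul_Q2 hd,
    Fsw_Fsw_mul_Q2 hd]
  cases i <;> cases j <;> simp only [SA.sign, reduceCtorEq, if_true, if_false] <;> module

lemma Q2_mul_EE (hd : (d : ℂ) ≠ 0) (i j : SA) :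
    Q2 d * EE d i j = if i = j then Q2 d * EId d i else 0 := by
  simp only [EE_eq, EId_eq, mul_add, mul_smul_comm, mul_one, ← Q2_mul_swapL hd,
    Q2_mul_Fsw_Fsw hd]
  cases i <;> cases j <;> simp only [SA.sign, reduceCtorEq, if_true, if_false] <;> module

lemma Q1_EId_Q2 (hd : (d : ℂ) ≠ 0) (k : SA) : Q1 d * EId d k * Q2 d = 0 := by
  simp only [EId_eq, mul_add, add_mul, mul_smul_comm, smul_mul_assoc, mul_one, Q1_mul_Q2 hd,
    Q1_swapL_Q2 hd, smul_zero, add_zero]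

lemma Q2_EId_Q1 (hd : (d : ℂ) ≠ 0) (k : SA) : Q2 d * EId d k * Q1 d = 0 := by
  simp only [EId_eq, mul_add, add_mul, mul_smul_comm, smul_mul_assoc, mul_one, Q2_mul_Q1 hd,
    Q2_swapL_Q1 hd, smul_zero, add_zero]

lemma Q1_EE_Q2 (hd : (d : ℂ) ≠ 0) (k l : SA) : Q1 d * EE d k l * Q2 d = 0 := by
  rw [mul_assoc, EE_mul_Q2 hd]
  split_ifs
  · rw [← mul_assoc, Q1_EId_Q2 hd]
  · rw [mul_zero]

lemma Q2_EE_Q1 (hd : (d : ℂ) ≠ 0) (k l : SA) : Q2 d * EE d k l * Q1 d = 0 := by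
  rw [Q2_mul_EE hd]
  split_ifs
  · rw [Q2_EId_Q1 hd]
  · rw [zero_mul]

noncomputable def Ghat2 (d : ℕ) (k l : SA) : Op d 2 := EId d k * Q2 d * EId d l

lemma Ghat1_mul_Ghat1 (hd : (d : ℂ) ≠ 0) (i j k l p q u v : SA) :
    Ghat1 d i j k l * Ghat1 d p q u v =
      if k = p ∧ l = q then bc d k l • Ghat1 d i j u v else 0 := by
  have h : Ghat1 d i j k l * Ghat1 d p q u v =
      EE d i j * (Q1 d * (EE d k l * EE d p q) * Q1 d) * EE d u v := by
    simp only [Ghat1, mul_assoc]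
  rw [h, EE_mul_EE]
  split_ifs with hkp
  · obtain ⟨rfl, rfl⟩ := hkp
    rw [Q1_EE_Q1 hd, mul_smul_comm, smul_mul_assoc, Ghat1]
  · simp

lemma Ghat2_mul_Ghat2 (hd : (d : ℂ) ≠ 0) (i j k l : SA) :
    Ghat2 d i j * Ghat2 d k l = if j = k then (mC d j / (d : ℂ) ^ 2) • Ghat2 d i l else 0 := by
  have h : Ghat2 d i j * Ghat2 d k l = EId d i * (Q2 d * (EId d j * EId d k) * Q2 d) * EId d l := by
    simp only [Ghat2, mul_assoc]
  rw [h, EId_mul_EId]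
  split_ifs with hjk
  · rw [Q2_EId_Q2 hd, mul_smul_comm, smul_mul_assoc, Ghat2]
  · simp

lemma Ghat1_mul_Ghat2 (hd : (d : ℂ) ≠ 0) (i j k l p q : SA) :
    Ghat1 d i j k l * Ghat2 d p q = 0 := by
  have h : Ghat1 d i j k l * Ghat2 d p q =
      EE d i j * (Q1 d * (EE d k l * EId d p) * Q2 d) * EId d q := by
    simp only [Ghat1, Ghat2, mul_assoc]
  rw [h, EE_mul_EId]
  split_ifs <;> simp [Q1_EE_Q2 hd]

lemma Ghat2_mul_Ghat1 (hd : (d : ℂ) ≠ 0) (i j k l u v : SA) :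
    Ghat2 d i j * Ghat1 d k l u v = 0 := by
  have h : Ghat2 d i j * Ghat1 d k l u v =
      EId d i * (Q2 d * (EId d j * EE d k l) * Q1 d) * EE d u v := by
    simp only [Ghat1, Ghat2, mul_assoc]
  rw [h, EId_mul_EE]
  split_ifs <;> simp [Q2_EE_Q1 hd]

lemma EE_mul_Ghat1 (i j k l u v : SA) :
    EE d i j * Ghat1 d k l u v = if i = k ∧ j = l then Ghat1 d k l u v else 0 := by
  simp only [Ghat1, ← mul_assoc, EE_mul_EE]
  split_ifs with h
  · obtain ⟨rfl, rfl⟩ := h; rfl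
  · simp

lemma Ghat1_mul_EE (i j k l u v : SA) :
    Ghat1 d k l u v * EE d i j = if u = i ∧ v = j then Ghat1 d k l u v else 0 := by
  simp only [Ghat1, mul_assoc, EE_mul_EE]
  split_ifs <;> simp

lemma EE_mul_Ghat2 (hd : (d : ℂ) ≠ 0) (i j k l : SA) :
    EE d i j * Ghat2 d k l = if i = k ∧ i = j then Ghat2 d i l else 0 := by
  simp only [Ghat2, ← mul_assoc, EE_mul_EId]
  by_cases hik : i = k
  · subst hik
    simp only [if_true, true_and, EE_mul_Q2 hd]
    split_ifs <;> simp
  · simp [hik]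

lemma Ghat2_mul_EE (hd : (d : ℂ) ≠ 0) (i j k l : SA) :
    Ghat2 d k l * EE d i j = if l = i ∧ i = j then Ghat2 d k i else 0 := by
  simp only [Ghat2, mul_assoc, EId_mul_EE]
  by_cases hli : l = i
  · subst hli
    simp only [if_true, true_and, Q2_mul_EE hd]
    split_ifs <;> simp
  · simp [hli]

lemma natCast_ne_zero_of_three_le (hd : 3 ≤ d) : (d : ℂ) ≠ 0 :=
  Nat.cast_ne_zero.2 (by omega)

lemma bc_ne_zero (hd : 3 ≤ d) (i j : SA) : bc d i j ≠ 0 := by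
  have h₀ := natCast_ne_zero_of_three_le hd
  have h₁ : (d : ℂ) + 2 ≠ 0 := by exact_mod_cast (by omega : d + 2 ≠ 0)
  have h₂ : (d : ℂ) - 2 ≠ 0 := sub_ne_zero.2 (by exact_mod_cast (by omega : d ≠ 2))
  cases i <;> cases j <;> simp [bc, h₀, h₁, h₂]

lemma mC_ne_zero (hd : 3 ≤ d) (i : SA) : mC d i ≠ 0 := by
  have h₀ := natCast_ne_zero_of_three_le hd
  have h₁ : (d : ℂ) + 1 ≠ 0 := by exact_mod_cast (by omega : d + 1 ≠ 0)
  have h₂ : (d : ℂ) - 1 ≠ 0 := sub_ne_zero.2 (by exact_mod_cast (by omega : d ≠ 1))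
  cases i <;> simp [mC, h₀, h₁, h₂]

lemma mR_nonneg (k : SA) : 0 ≤ mR d k := by
  cases k
  · unfold mR; positivity
  · rcases Nat.eq_zero_or_pos d with rfl | h
    · simp [mR]
    · have h₁ : (1 : ℝ) ≤ d := by exact_mod_cast h
      unfold mR
      apply div_nonneg _ zero_le_two
      nlinarith

lemma G2_eq_smul (k l : SA) :
    G2 d k l = ((d : ℂ) ^ 2 / ((Real.sqrt (mR d k * mR d l) : ℝ) : ℂ)) • Ghat2 d k l := rfl

lemma G2_self (k : SA) : G2 d k k = ((d : ℂ) ^ 2 / mC d k) • Ghat2 d k k := by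
  rw [G2_eq_smul, Real.sqrt_mul_self (mR_nonneg k)]
  cases k <;> simp [mR, mC]

lemma G0_eq (i j : SA) : G0 d i j = EE d i j - (bc d i j)⁻¹ • Ghat1 d i j i j -
    (if i = j then (d : ℂ) ^ 2 / mC d i else 0) • Ghat2 d i i := rfl

lemma inv_mC_smul_mC_smul (hd : 3 ≤ d) (i : SA) (X : Op d 2) :
    ((d : ℂ) ^ 2 / mC d i) • (mC d i / (d : ℂ) ^ 2) • X = X := by
  have h₀ := natCast_ne_zero_of_three_le hd
  have hm := mC_ne_zero hd i
  rw [smul_smul, div_mul_div_cancel₀ hm, div_self (pow_ne_zero 2 h₀), one_smul]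

lemma G0_mul_Ghat2 (hd : 3 ≤ d) (i j k l : SA) : G0 d i j * Ghat2 d k l = 0 := by
  have h₀ := natCast_ne_zero_of_three_le hd
  rw [G0_eq, sub_mul, sub_mul, smul_mul_assoc, smul_mul_assoc, EE_mul_Ghat2 h₀,
    Ghat1_mul_Ghat2 h₀, Ghat2_mul_Ghat2 h₀, smul_zero, sub_zero]
  by_cases h : i = k ∧ i = j
  · obtain ⟨rfl, rfl⟩ := h
    rw [if_pos ⟨rfl, rfl⟩, if_pos rfl, if_pos rfl, inv_mC_smul_mC_smul hd, sub_self]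
  · by_cases hij : i = j <;> by_cases hik : i = k <;> simp_all

lemma Ghat2_mul_G0 (hd : 3 ≤ d) (i j k l : SA) : Ghat2 d k l * G0 d i j = 0 := by
  have h₀ := natCast_ne_zero_of_three_le hd
  rw [G0_eq, mul_sub, mul_sub, mul_smul_comm, mul_smul_comm, Ghat2_mul_EE h₀,
    Ghat2_mul_Ghat1 h₀, Ghat2_mul_Ghat2 h₀, smul_zero, sub_zero]
  by_cases h : l = i ∧ i = j
  · obtain ⟨rfl, rfl⟩ := h
    rw [if_pos ⟨rfl, rfl⟩, if_pos rfl, if_pos rfl, inv_mC_smul_mC_smul hd, sub_self]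
  · by_cases hij : i = j <;> by_cases hli : l = i <;> simp_all

lemma G0_mul_Ghat1 (hd : 3 ≤ d) (i j k l u v : SA) : G0 d i j * Ghat1 d k l u v = 0 := by
  have h₀ := natCast_ne_zero_of_three_le hd
  rw [G0_eq, sub_mul, sub_mul, smul_mul_assoc, smul_mul_assoc, EE_mul_Ghat1, Ghat1_mul_Ghat1 h₀,
    Ghat2_mul_Ghat1 h₀, smul_zero, sub_zero]
  split_ifs with h
  · obtain ⟨rfl, rfl⟩ := h
    rw [smul_smul, inv_mul_cancel₀ (bc_ne_zero hd i j), one_smul, sub_self]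
  · rw [smul_zero, sub_zero]

lemma Ghat1_mul_G0 (hd : 3 ≤ d) (i j k l u v : SA) : Ghat1 d k l u v * G0 d i j = 0 := by
  have h₀ := natCast_ne_zero_of_three_le hd
  rw [G0_eq, mul_sub, mul_sub, mul_smul_comm, mul_smul_comm, Ghat1_mul_EE, Ghat1_mul_Ghat1 h₀,
    Ghat1_mul_Ghat2 h₀, smul_zero, sub_zero]
  split_ifs with h
  · obtain ⟨rfl, rfl⟩ := h
    rw [smul_smul, inv_mul_cancel₀ (bc_ne_zero hd u v), one_smul, sub_self]
  · rw [smul_zero, sub_zero]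

lemma sum_G0 : ∑ i, ∑ j, G0 d i j = 1 - G1sum d - G2sum d := by
  simp only [G0_eq, Finset.sum_sub_distrib, sum_EE, G1sum, G1, G2sum, G2_self]
  simp only [SA.sum_univ, if_pos, reduceCtorEq, if_false, zero_smul]
  abel

lemma G1sum_eq : G1sum d = ∑ p : SA × SA, (bc d p.1 p.2)⁻¹ • Ghat1 d p.1 p.2 p.1 p.2 := by
  rw [G1sum, Fintype.sum_prod_type]
  rfl

lemma G2sum_eq : G2sum d = ∑ k, (mC d k / (d : ℂ) ^ 2)⁻¹ • Ghat2 d k k := by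
  rw [G2sum, SA.sum_univ, G2_self, G2_self, inv_div, inv_div]

lemma isIdempotentElem_G1sum (hd : 3 ≤ d) : IsIdempotentElem (G1sum d) := by
  rw [G1sum_eq]
  refine IsIdempotentElem.sum_inv_smul _ _ _ (fun p _ => bc_ne_zero hd p.1 p.2) fun p _ q _ => ?_
  rw [Ghat1_mul_Ghat1 (natCast_ne_zero_of_three_le hd)]
  by_cases h : p = q
  · subst h
    simp
  · rw [if_neg h, if_neg fun h' => h (Prod.ext h'.1 h'.2)]

lemma isIdempotentElem_G2sum (hd : 3 ≤ d) : IsIdempotentElem (G2sum d) := by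
  have h₀ := natCast_ne_zero_of_three_le hd
  rw [G2sum_eq]
  refine IsIdempotentElem.sum_inv_smul _ _ _
    (fun k _ => div_ne_zero (mC_ne_zero hd k) (pow_ne_zero 2 h₀)) fun k _ l _ => ?_
  rw [Ghat2_mul_Ghat2 h₀]
  split_ifs with h
  · rw [h]
  · rfl

lemma G1sum_mul_G2sum (hd : (d : ℂ) ≠ 0) : G1sum d * G2sum d = 0 := by
  simp only [G1sum_eq, G2sum_eq, Finset.sum_mul_sum, smul_mul_smul_comm, Ghat1_mul_Ghat2 hd,
    smul_zero, Finset.sum_const_zero]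

lemma G2sum_mul_G1sum (hd : (d : ℂ) ≠ 0) : G2sum d * G1sum d = 0 := by
  simp only [G1sum_eq, G2sum_eq, Finset.sum_mul_sum, smul_mul_smul_comm, Ghat2_mul_Ghat1 hd,
    smul_zero, Finset.sum_const_zero]

lemma isIdempotentElem_one_sub_G1sum_sub_G2sum (hd : 3 ≤ d) :
    IsIdempotentElem (1 - G1sum d - G2sum d) := by
  have h₀ := natCast_ne_zero_of_three_le hd
  rw [sub_sub]
  refine ((isIdempotentElem_G1sum hd).add (isIdempotentElem_G2sum hd) ?_).one_sub
  rw [G1sum_mul_G2sum h₀, G2sum_mul_G1sum h₀, add_zero]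

end

/-- for `d ≥ 3` the three families give mutually orthogonal ideals summing
to the identity: `Σ_{ij} G^(0)_{ij} = 1 - G^(1) - G^(2)` (an idempotent), and all cross
products between the `G^(0)`, `Ĝ^(1)` and `G^(2)` families vanish. -/
theorem ideals_resolution (d : ℕ) (hd : 3 ≤ d) :
    (∑ i : SA, ∑ j : SA, G0 d i j) = 1 - G1sum d - G2sum d ∧
    (1 - G1sum d - G2sum d) * (1 - G1sum d - G2sum d) = 1 - G1sum d - G2sum d ∧
    (∀ i j k l : SA, G0 d i j * G2 d k l = 0 ∧ G2 d k l * G0 d i j = 0) ∧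
    (∀ i j k l u v : SA,
      G0 d i j * Ghat1 d k l u v = 0 ∧ Ghat1 d k l u v * G0 d i j = 0) ∧
    (∀ i j k l u v : SA,
      G2 d i j * Ghat1 d k l u v = 0 ∧ Ghat1 d k l u v * G2 d i j = 0) := by
  have h₀ := natCast_ne_zero_of_three_le hd
  refine ⟨sum_G0, isIdempotentElem_one_sub_G1sum_sub_G2sum hd, fun i j k l => ?_,
    fun i j k l u v => ⟨G0_mul_Ghat1 hd i j k l u v, Ghat1_mul_G0 hd i j k l u v⟩,
    fun i j k l u v => ?_⟩
  · rw [G2_eq_smul, mul_smul_comm, smul_mul_assoc, G0_mul_Ghat2 hd, Ghat2_mul_G0 hd, smul_zero]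
    exact ⟨rfl, rfl⟩
  · rw [G2_eq_smul, mul_smul_comm, smul_mul_assoc, Ghat2_mul_Ghat1 h₀, Ghat1_mul_Ghat2 h₀,
      smul_zero]
    exact ⟨rfl, rfl⟩

end WBA
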